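/- arXiv:0704.2041 — 2 statements merged into one kernel-verified Lean document; each statement's English description precedes it below -/
import Mathlib

section
/- Let n = 4k with k ≥ 1 and q = 2k+1. Among all pairs of nonnegative integers (a,b) with a + b > 0 and q·a + b ≡ 0 (mod n), the minimum value of a + b is 2k, and it is attained exactly by the pairs (a, b) = (2j−1, 2k − (2j−1)) for j = 1, …, k (i.e., a odd, a + b = 2k). -/
/-! Since `(n + 1) a + b = n a + (a + b)`, a multiple of `4k = 2 · 2k` of the form `(2k + 1) a + b`
forces `2k ∣ a + b`, so `a + b ≥ 2k`; and when `a + b = 2k` the sum is `2k (a + 1)`, which is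
divisible by `4k` exactly when `a` is odd. -/

lemma succ_mul_add_eq (n a b : ℕ) : (n + 1) * a + b = n * a + (a + b) := by ring

lemma dvd_add_of_dvd_succ_mul_add {n a b : ℕ} (h : n ∣ (n + 1) * a + b) : n ∣ a + b := by
  rw [succ_mul_add_eq] at h
  exact (Nat.dvd_add_right (dvd_mul_right n a)).mp h

lemma two_mul_dvd_succ_mul_add_iff_odd {n a b : ℕ} (hn : 0 < n) (hab : a + b = n) :
    2 * n ∣ (n + 1) * a + b ↔ Odd a := by
  rw [succ_mul_add_eq, hab, ← mul_add_one, mul_comm 2 n, mul_dvd_mul_iff_left hn.ne',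
    ← even_iff_two_dvd, Nat.even_add_one, Nat.not_even_iff_odd]

/-- For n = 4k, q = 2k+1: among pairs (a,b) of nonnegative integers with a+b > 0 and
qa + b ≡ 0 (mod n), the minimum of a+b is 2k, attained exactly by the pairs with
a + b = 2k and a odd. -/
theorem min_degree_invariant_monomials (k : ℕ) (hk : 1 ≤ k) :
    IsLeast {m : ℕ | 0 < m ∧ ∃ a b : ℕ, a + b = m ∧ 4 * k ∣ (2 * k + 1) * a + b}
      (2 * k) ∧
    ∀ a b : ℕ, a + b = 2 * k → (4 * k ∣ (2 * k + 1) * a + b ↔ Odd a) := by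
  have hn : 0 < 2 * k := by omega
  have h4k : 4 * k = 2 * (2 * k) := by ring
  have hodd : ∀ a b : ℕ, a + b = 2 * k → (4 * k ∣ (2 * k + 1) * a + b ↔ Odd a) :=
    fun a b hab => h4k ▸ two_mul_dvd_succ_mul_add_iff_odd hn hab
  refine ⟨⟨⟨hn, 1, 2 * k - 1, by omega, (hodd _ _ (by omega)).mpr odd_one⟩, ?_⟩, hodd⟩
  rintro m ⟨hm, a, b, rfl, hdvd⟩
  exact Nat.le_of_dvd hm (dvd_add_of_dvd_succ_mul_add ((Dvd.intro_left 2 h4k.symm).trans hdvd))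
end

section
/- Let M be a compact metric space and let CM denote the metric cone on M: the quotient of [0,∞) × M by collapsing {0} × M to a point p, with metric d((t,x),(s,y)) satisfying d((t,x), p) = t and the scaling property d((λt, x), (λs, y)) = λ·d((t,x),(s,y)) for λ > 0. Then for every δ > 0 and ρ > 0 there is no sequence of loops γₙ in CM ∖ {p}, each at distance ≥ δ from p, pairwise freely homotopic in CM ∖ {p} to a fixed loop that is essential (not null-homotopic) in CM ∖ {p}, with diam(γₙ) → 0. Equivalently: in a metric cone, any family of loops at distance ≥ δ from the cone point with diameters tending to 0 is eventually null-homotopic in CM ∖ {p}. -/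
/-- The standard cone distance over a metric space M: d((t,x),(s,y))² =
t² + s² − 2ts·cos(min(d(x,y),π)).  The apex corresponds to t = 0 and
d((t,x), apex) = t. -/
noncomputable def coneDist {M : Type*} [MetricSpace M] (z w : ℝ × M) : ℝ :=
  Real.sqrt (z.1 ^ 2 + w.1 ^ 2 - 2 * z.1 * w.1 * Real.cos (min (dist z.2 w.2) Real.pi))

/-- A loop contained in a contractible subset is null-homotopic. -/
lemma loop_in_contractible_nullhomotopic {X : Type*} [TopologicalSpace X] {A : Set X}
    (hA : ContractibleSpace A) {x : X} (hx : x ∈ A) (γ : Path x x)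
    (hγ : ∀ s, γ s ∈ A) : γ.Homotopic (Path.refl x) := by
  haveI := hA
  let γ' : Path (⟨x, hx⟩ : A) (⟨x, hx⟩ : A) :=
    { toFun := fun s => ⟨γ s, hγ s⟩
      continuous_toFun := γ.continuous.subtype_mk _
      source' := by ext1; simp
      target' := by ext1; simp }
  have h := SimplyConnectedSpace.paths_homotopic (X := A) γ' (Path.refl _)
  have h2 := h.map ⟨(Subtype.val : A → X), continuous_subtype_val⟩
  have e1 : γ'.map (f := (Subtype.val : A → X)) continuous_subtype_val = γ := by
    ext s; rfl
  have e2 : (Path.refl (⟨x, hx⟩ : A)).map (f := (Subtype.val : A → X))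
      continuous_subtype_val = Path.refl x := by
    ext s; rfl
  rwa [e1, e2] at h2

/-- Around every point of a charted space there is an open set `V` such that
products of small intervals with `V` (inside the punctured cone) are contractible. -/
lemma exists_good_nbhd (m : ℕ) (M : Type*) [MetricSpace M]
    [ChartedSpace (EuclideanSpace ℝ (Fin m)) M] (p : M) :
    ∃ V : Set M, IsOpen V ∧ p ∈ V ∧ ∀ a b : ℝ, 0 ≤ a → a < b →
      ContractibleSpace ↥({z : {z : ℝ × M // 0 < z.1} |
        z.val.1 ∈ Set.Ioo a b ∧ z.val.2 ∈ V}) := by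
  let e := chartAt (EuclideanSpace ℝ (Fin m)) p
  have he : p ∈ e.source := mem_chart_source _ p
  obtain ⟨r, hr, hball⟩ := Metric.isOpen_iff.mp e.open_target (e p) (e.map_source he)
  refine ⟨e.source ∩ e ⁻¹' Metric.ball (e p) r,
    e.isOpen_inter_preimage Metric.isOpen_ball, ⟨he, Metric.mem_ball_self hr⟩, ?_⟩
  intro a b ha hab
  set V : Set M := e.source ∩ e ⁻¹' Metric.ball (e p) r with hV
  set T : Set (ℝ × EuclideanSpace ℝ (Fin m)) := Set.Ioo a b ×ˢ Metric.ball (e p) r with hT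
  have hTconv : Convex ℝ T := (convex_Ioo a b).prod (convex_ball _ _)
  have hTne : T.Nonempty :=
    ⟨((a + b) / 2, e p), ⟨by constructor <;> linarith, Metric.mem_ball_self hr⟩⟩
  haveI hTc : ContractibleSpace T := hTconv.contractibleSpace hTne
  let φ : ↥({z : {z : ℝ × M // 0 < z.1} | z.val.1 ∈ Set.Ioo a b ∧ z.val.2 ∈ V}) ≃ₜ T :=
  { toFun := fun z => ⟨(z.val.val.1, e z.val.val.2), z.prop.1, z.prop.2.2⟩
    invFun := fun w => ⟨⟨(w.val.1, e.symm w.val.2), lt_of_le_of_lt ha w.prop.1.1⟩,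
      w.prop.1, e.map_target (hball w.prop.2), by
        show e (e.symm w.val.2) ∈ Metric.ball (e p) r
        rw [e.right_inv (hball w.prop.2)]; exact w.prop.2⟩
    left_inv := fun z => by
      apply Subtype.ext; apply Subtype.ext
      exact Prod.ext rfl (e.left_inv z.prop.2.1)
    right_inv := fun w => by
      apply Subtype.ext
      exact Prod.ext rfl (e.right_inv (hball w.prop.2))
    continuous_toFun := by
      apply Continuous.subtype_mk
      refine Continuous.prodMk
        ((continuous_fst.comp continuous_subtype_val).comp continuous_subtype_val) ?_
      exact e.continuousOn.comp_continuous
        ((continuous_snd.comp continuous_subtype_val).comp continuous_subtype_val)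
        (fun z => z.prop.2.1)
    continuous_invFun := by
      apply Continuous.subtype_mk
      apply Continuous.subtype_mk
      refine Continuous.prodMk (continuous_fst.comp continuous_subtype_val) ?_
      exact e.continuousOn_symm.comp_continuous
        (continuous_snd.comp continuous_subtype_val) (fun w => hball w.prop.2) }
  exact φ.contractibleSpace

/-- Arithmetic of the cone metric: a small cone distance between points at
distance ≥ δ from the apex forces both coordinates to be close. -/
lemma coneDist_small {δ η β : ℝ} (hδ : 0 < δ) (hη : 0 < η)
    (hη2 : η ^ 2 < 2 * δ ^ 2 * (1 - Real.cos β)) (hβ0 : 0 < β) (hβπ : β ≤ Real.pi)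
    {M : Type*} [MetricSpace M] {z w : ℝ × M} (hz : δ ≤ z.1) (hw : δ ≤ w.1)
    (h : coneDist z w < η) : |z.1 - w.1| < η ∧ dist z.2 w.2 < β := by
  set t := z.1
  set s := w.1
  set θ := min (dist z.2 w.2) Real.pi with hθ
  have hθ0 : 0 ≤ θ := le_min dist_nonneg Real.pi_pos.le
  have hθπ : θ ≤ Real.pi := min_le_right _ _
  set c := Real.cos θ with hc
  have hc1 : c ≤ 1 := Real.cos_le_one θ
  have h1c : 0 ≤ 1 - c := by linarith
  have hts : δ ^ 2 ≤ t * s := by nlinarith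
  unfold coneDist at h
  rw [Real.sqrt_lt' hη] at h
  -- h : t ^ 2 + s ^ 2 - 2 * t * s * c < η ^ 2
  have hsq : (t - s) ^ 2 < η ^ 2 := by
    nlinarith [mul_nonneg (show (0:ℝ) ≤ 2 * (t * s) by nlinarith) h1c]
  have habs : |t - s| < η := by
    by_contra hcon
    push_neg at hcon
    have := sq_abs (t - s)
    nlinarith [abs_nonneg (t - s)]
  refine ⟨habs, ?_⟩
  have hkey : Real.cos β < c := by
    by_contra hcon
    push_neg at hcon
    nlinarith [sq_nonneg (t - s),
      mul_nonneg (show (0:ℝ) ≤ t * s - δ ^ 2 by nlinarith) h1c,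
      mul_le_mul_of_nonneg_left (show 1 - Real.cos β ≤ 1 - c by linarith)
        (show (0:ℝ) ≤ 2 * δ ^ 2 by positivity)]
  have hθβ : θ < β := by
    by_contra hcon
    push_neg at hcon
    have := Real.cos_le_cos_of_nonneg_of_le_pi hβ0.le hθπ hcon
    linarith
  by_contra hcon
  push_neg at hcon
  have : β ≤ θ := le_min hcon hβπ
  linarith

set_option maxHeartbeats 1000000 in
/-- In the metric cone over a compact (manifold) link M, any family of loops staying at
distance ≥ δ from the cone point whose diameters tend to 0 is eventually null-homotopic
in the complement of the cone point.  CM ∖ {p} is modelled as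
{z : ℝ × M | 0 < z.1}, where distance to the cone point is the first coordinate. -/
theorem small_loops_in_cone_nullhomotopic
    (m : ℕ) (M : Type*) [MetricSpace M] [CompactSpace M]
    [ChartedSpace (EuclideanSpace ℝ (Fin m)) M]
    (δ : ℝ) (hδ : 0 < δ)
    (x : ℕ → {z : ℝ × M // 0 < z.1})
    (γ : ∀ n : ℕ, Path (x n) (x n))
    (hdist : ∀ n : ℕ, ∀ s : unitInterval, δ ≤ ((γ n s : ℝ × M).1))
    (hdiam : Filter.Tendsto
      (fun n : ℕ => ⨆ s : unitInterval, ⨆ s' : unitInterval,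
        coneDist (γ n s : ℝ × M) (γ n s' : ℝ × M))
      Filter.atTop (nhds 0)) :
    ∃ N : ℕ, ∀ n ≥ N, (γ n).Homotopic (Path.refl (x n)) := by
  classical
  choose V hVopen hVmem hVcon using exists_good_nbhd m M
  obtain ⟨ε, hε, hleb⟩ := lebesgue_number_lemma_of_metric (s := (Set.univ : Set M))
    isCompact_univ (fun p => hVopen p) (fun y _ => Set.mem_iUnion.mpr ⟨y, hVmem y⟩)
  set β := min ε Real.pi with hβdef
  have hβ0 : 0 < β := lt_min hε Real.pi_pos
  have hβπ : β ≤ Real.pi := min_le_right _ _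
  have hβε : β ≤ ε := min_le_left _ _
  have hcosβ : Real.cos β < 1 := by
    have := Real.strictAntiOn_cos ⟨le_refl 0, Real.pi_pos.le⟩ ⟨hβ0.le, hβπ⟩ hβ0
    simpa using this
  set η := min (δ / 2) (δ * Real.sqrt (1 - Real.cos β)) with hηdef
  have hη0 : 0 < η := lt_min (by linarith)
    (mul_pos hδ (Real.sqrt_pos.mpr (by linarith)))
  have hηδ : η ≤ δ / 2 := min_le_left _ _
  have hη2 : η ^ 2 < 2 * δ ^ 2 * (1 - Real.cos β) := by
    have h1 : η ≤ δ * Real.sqrt (1 - Real.cos β) := min_le_right _ _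
    have h2 : (δ * Real.sqrt (1 - Real.cos β)) ^ 2 = δ ^ 2 * (1 - Real.cos β) := by
      rw [mul_pow, Real.sq_sqrt (by linarith)]
    nlinarith [mul_le_mul h1 h1 hη0.le
      (by positivity : (0:ℝ) ≤ δ * Real.sqrt (1 - Real.cos β))]
  obtain ⟨N, hN⟩ := Metric.tendsto_atTop.mp hdiam η hη0
  refine ⟨N, fun n hn => ?_⟩
  -- the diameter bound, pointwise
  have hFcont : Continuous (fun q : unitInterval × unitInterval =>
      coneDist (γ n q.1 : ℝ × M) (γ n q.2 : ℝ × M)) := by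
    unfold coneDist
    fun_prop
  have hbdd : BddAbove (Set.range (fun q : unitInterval × unitInterval =>
      coneDist (γ n q.1 : ℝ × M) (γ n q.2 : ℝ × M))) :=
    (isCompact_range hFcont).bddAbove
  obtain ⟨C, hC⟩ := hbdd
  have hCb : ∀ s s' : unitInterval, coneDist (γ n s : ℝ × M) (γ n s' : ℝ × M) ≤ C :=
    fun s s' => hC ⟨(s, s'), rfl⟩
  have hsup : (⨆ s : unitInterval, ⨆ s' : unitInterval,
      coneDist (γ n s : ℝ × M) (γ n s' : ℝ × M)) < η := by
    have := hN n hn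
    rw [Real.dist_eq, sub_zero] at this
    exact lt_of_abs_lt this
  have hkey : ∀ s s' : unitInterval,
      coneDist (γ n s : ℝ × M) (γ n s' : ℝ × M) < η := by
    intro s s'
    have h1 : coneDist (γ n s : ℝ × M) (γ n s' : ℝ × M) ≤
        ⨆ s'' : unitInterval, coneDist (γ n s : ℝ × M) (γ n s'' : ℝ × M) :=
      le_ciSup ⟨C, by rintro y ⟨s'', rfl⟩; exact hCb s s''⟩ s'
    have h2 : (⨆ s'' : unitInterval, coneDist (γ n s : ℝ × M) (γ n s'' : ℝ × M)) ≤
        ⨆ u : unitInterval, ⨆ s'' : unitInterval,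
          coneDist (γ n u : ℝ × M) (γ n s'' : ℝ × M) := by
      refine le_ciSup (f := fun u : unitInterval =>
        ⨆ s'' : unitInterval, coneDist (γ n u : ℝ × M) (γ n s'' : ℝ × M)) ?_ s
      refine ⟨C, ?_⟩
      rintro y ⟨u, rfl⟩
      exact ciSup_le fun s'' => hCb u s''
    exact lt_of_le_of_lt (h1.trans h2) hsup
  have hbase : γ n 0 = x n := (γ n).source
  have hw : δ ≤ ((x n : ℝ × M)).1 := by rw [← hbase]; exact hdist n 0
  have hsmall : ∀ s : unitInterval,
      |(γ n s : ℝ × M).1 - (x n : ℝ × M).1| < η ∧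
      dist (γ n s : ℝ × M).2 (x n : ℝ × M).2 < β := by
    intro s
    have hcd := hkey s 0
    rw [hbase] at hcd
    exact coneDist_small hδ hη0 hη2 hβ0 hβπ (hdist n s) hw hcd
  set t₀ := (x n : ℝ × M).1 with ht₀
  obtain ⟨q, hq⟩ := hleb ((x n : ℝ × M).2) (Set.mem_univ _)
  have ha : (0:ℝ) ≤ t₀ - δ / 2 := by linarith
  have hab : t₀ - δ / 2 < t₀ + δ / 2 := by linarith
  have hcon := hVcon q (t₀ - δ / 2) (t₀ + δ / 2) ha hab
  have hxmem : x n ∈ {z : {z : ℝ × M // 0 < z.1} |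
      z.val.1 ∈ Set.Ioo (t₀ - δ / 2) (t₀ + δ / 2) ∧ z.val.2 ∈ V q} :=
    ⟨⟨by linarith, by linarith⟩,
      hq (Metric.mem_ball_self hε)⟩
  refine loop_in_contractible_nullhomotopic hcon hxmem (γ n) ?_
  intro s
  obtain ⟨hs1, hs2⟩ := hsmall s
  rw [abs_lt] at hs1
  refine ⟨⟨by linarith, by linarith⟩, hq ?_⟩
  exact Metric.mem_ball.mpr (lt_of_lt_of_le hs2 hβε)
end
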